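/- arXiv:2408.07118 — 2 statements merged into one kernel-verified Lean document; each statement's English description precedes it below -/
import Mathlib

section
/- If v and w are adjacent vertices of a simple graph G, then τ_v(τ_w(τ_v(G))) = τ_w(τ_v(τ_w(G))), where τ denotes local complementation. -/
/-- Local complementation at `v`: the induced subgraph on the neighborhood of `v`
is replaced by its complement (edge set `E Δ {{i,j} : i, j ∈ N_v, i ≠ j}`). -/
def locComp {V : Type*} (G : SimpleGraph V) (v : V) : SimpleGraph V where
  Adj a b := a ≠ b ∧ Xor' (G.Adj a b) (G.Adj v a ∧ G.Adj v b)
  symm := ⟨by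
    rintro a b ⟨hab, h⟩
    refine ⟨hab.symm, ?_⟩
    have hc : G.Adj a b ↔ G.Adj b a := G.adj_comm a b
    simp only [Xor', Xor] at h ⊢
    tauto⟩
  loopless := ⟨fun a h => h.1 rfl⟩

/-!
Write `x`, `y` for the open and `x̂`, `ŷ` for the closed neighbourhoods of `v` and `w` in `G`, and
compute modulo 2. Applying `τ_v` keeps the neighbourhood of `v` and turns that of its neighbour `w`
into `ŷ + x`; so `τ_w τ_v G` gives `v` the neighbourhood `x̂ + ŷ + x`. Adding up the three
toggles, `τ_v τ_w τ_v G` differs from `G` on a pair `a ≠ b` exactly by `x̂_a ŷ_b + ŷ_a x̂_b`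
(the pivot on `vw`), which is symmetric in `v` and `w`.
-/

section

variable {V : Type*} {G : SimpleGraph V} {v w a b : V}

theorem locComp_adj : (locComp G v).Adj a b ↔ a ≠ b ∧ Xor (G.Adj a b) (G.Adj v a ∧ G.Adj v b) :=
  Iff.rfl

theorem locComp_adj_self : (locComp G v).Adj v a ↔ G.Adj v a := by
  grind [locComp_adj, SimpleGraph.Adj.ne, SimpleGraph.irrefl]

theorem locComp_adj_of_adj (h : G.Adj v w) :
    (locComp G v).Adj w a ↔ Xor (w = a ∨ G.Adj w a) (G.Adj v a) := by
  grind [locComp_adj, SimpleGraph.Adj.ne, SimpleGraph.irrefl, SimpleGraph.adj_symm]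

theorem locComp_locComp_locComp_adj (h : G.Adj v w) :
    (locComp (locComp (locComp G v) w) v).Adj a b ↔ a ≠ b ∧
      Xor (G.Adj a b) (Xor ((v = a ∨ G.Adj v a) ∧ (w = b ∨ G.Adj w b))
        ((w = a ∨ G.Adj w a) ∧ (v = b ∨ G.Adj v b))) := by
  have hwv : (locComp G v).Adj w v := (locComp_adj_self.2 h).symm
  have hv : ∀ c, (locComp (locComp G v) w).Adj v c ↔
      Xor (v = c ∨ G.Adj v c) (Xor (w = c ∨ G.Adj w c) (G.Adj v c)) := fun c => by
    rw [locComp_adj_of_adj hwv, locComp_adj_self, locComp_adj_of_adj h]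
  simp only [locComp_adj (G := locComp (locComp G v) w), hv, locComp_adj (G := locComp G v),
    locComp_adj_of_adj h, locComp_adj (G := G)]
  grind [SimpleGraph.Adj.ne, SimpleGraph.irrefl]

end

/-- If  and  03:17:36 up 3 min,  0 user,  load average: 0.23, 0.06, 0.02
USER     TTY      FROM             LOGIN@   IDLE   JCPU   PCPU WHAT are adjacent, then . -/
theorem locComp_triple {V : Type*} (G : SimpleGraph V) (v w : V) (hvw : G.Adj v w) :
    locComp (locComp (locComp G v) w) v = locComp (locComp (locComp G w) v) w := by
  ext a b
  rw [locComp_locComp_locComp_adj hvw, locComp_locComp_locComp_adj hvw.symm, xor_comm (_ ∧ _)]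
end

section
/- In a rooted tree, for any n vertices i_1, ..., i_n, the set of pairwise meets {a_{i_s, i_t} : s ≠ t} contains at most n−1 distinct vertices. -/
open SimpleGraph Finset

/-- A laminar family of sets of size at least 2 inside a ground set `X`
has at most `|X| - 1` members. -/
lemma laminar_card_le {α : Type*} [DecidableEq α] :
    ∀ (N : ℕ) (X : Finset α) (F : Finset (Finset α)), X.card ≤ N →
      (∀ S ∈ F, 2 ≤ S.card) → (∀ S ∈ F, S ⊆ X) →
      (∀ S ∈ F, ∀ T ∈ F, S ⊆ T ∨ T ⊆ S ∨ Disjoint S T) →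
      F.card ≤ X.card - 1 := by
  intro N
  induction N with
  | zero =>
    intro X F hXN h2 hX _
    have hF : F = ∅ := by
      by_contra h
      obtain ⟨S, hS⟩ := Finset.nonempty_iff_ne_empty.mpr h
      have := h2 S hS
      have := Finset.card_le_card (hX S hS)
      omega
    simp [hF]
  | succ N ih =>
    intro X F hXN h2 hX hlam
    by_cases hF : F = ∅
    · simp [hF]
    obtain ⟨S, hS, hmin⟩ := Finset.exists_min_image F Finset.card
      (Finset.nonempty_iff_ne_empty.mpr hF)
    have hSpos : 0 < S.card := by have := h2 S hS; omega
    obtain ⟨s0, hs0⟩ := Finset.card_pos.mp hSpos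
    set D : Finset α := S \ {s0} with hD
    have hDS : D ⊆ S := Finset.sdiff_subset
    have hDX : D ⊆ X := hDS.trans (hX S hS)
    have hs0D : s0 ∉ D := by simp [hD]
    have hDcard : D.card = S.card - 1 := by
      rw [hD, Finset.card_sdiff_of_subset (by simpa using hs0)]; simp
    -- every other member either contains S or is disjoint from it
    have hkey : ∀ T ∈ F.erase S, S ⊆ T ∨ Disjoint S T := by
      intro T hT
      have hTS : T ≠ S := Finset.ne_of_mem_erase hT
      have hTF : T ∈ F := Finset.mem_of_mem_erase hT
      rcases hlam S hS T hTF with h | h | h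
      · exact Or.inl h
      · exact absurd (Finset.eq_of_subset_of_card_le h (hmin T hTF)) hTS
      · exact Or.inr h
    set F' : Finset (Finset α) := (F.erase S).image (fun T => T \ D) with hF'
    have hinj : Set.InjOn (fun T => T \ D) ↑(F.erase S) := by
      intro T1 h1 T2 h2' heq
      simp only at heq
      have r1 : ∀ T ∈ F.erase S, (S ⊆ T → (T \ D) ∪ D = T ∧ s0 ∈ T \ D) ∧
          (Disjoint S T → T \ D = T ∧ s0 ∉ T \ D) := by
        intro T hT
        constructor
        · intro hST
          refine ⟨Finset.sdiff_union_of_subset (hDS.trans hST), ?_⟩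
          exact Finset.mem_sdiff.mpr ⟨hST hs0, hs0D⟩
        · intro hdis
          refine ⟨Finset.sdiff_eq_self_of_disjoint (Disjoint.mono_left hDS hdis).symm, ?_⟩
          intro hmem
          exact (Finset.disjoint_left.mp hdis hs0) (Finset.mem_sdiff.mp hmem).1
      rcases hkey T1 h1 with c1 | c1 <;> rcases hkey T2 h2' with c2 | c2
      · have a1 := (r1 T1 h1).1 c1
        have a2 := (r1 T2 h2').1 c2
        rw [← a1.1, ← a2.1, heq]
      · exact absurd (heq ▸ (r1 T1 h1).1 c1 |>.2) ((r1 T2 h2').2 c2).2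
      · exact absurd (heq ▸ ((r1 T2 h2').1 c2).2) (((r1 T1 h1).2 c1).2)
      · rw [← ((r1 T1 h1).2 c1).1, ← ((r1 T2 h2').2 c2).1, heq]
    have hcardF' : F'.card = (F.erase S).card := Finset.card_image_of_injOn hinj
    have hX'card : (X \ D).card = X.card - D.card := Finset.card_sdiff_of_subset hDX
    have hSX : S.card ≤ X.card := Finset.card_le_card (hX S hS)
    have h2S := h2 S hS
    have ihapp : F'.card ≤ (X \ D).card - 1 := by
      apply ih (X \ D) F'
      · omega
      · intro S' hS'
        obtain ⟨T, hT, rfl⟩ := Finset.mem_image.mp hS'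
        rcases hkey T hT with c | c
        · have hTF := Finset.mem_of_mem_erase hT
          have hne : S ≠ T := fun h => Finset.ne_of_mem_erase hT h.symm
          have : S.card < T.card := Finset.card_lt_card (lt_of_le_of_ne c hne)
          have hDT : D ⊆ T := hDS.trans c
          rw [Finset.card_sdiff_of_subset hDT]
          omega
        · rw [Finset.sdiff_eq_self_of_disjoint (Disjoint.mono_left hDS c).symm]
          exact h2 T (Finset.mem_of_mem_erase hT)
      · intro S' hS'
        obtain ⟨T, hT, rfl⟩ := Finset.mem_image.mp hS'
        exact Finset.sdiff_subset_sdiff (hX T (Finset.mem_of_mem_erase hT)) le_rfl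
      · intro S1 h1 S2 h2'
        obtain ⟨T1, hT1, rfl⟩ := Finset.mem_image.mp h1
        obtain ⟨T2, hT2, rfl⟩ := Finset.mem_image.mp h2'
        rcases hlam T1 (Finset.mem_of_mem_erase hT1) T2 (Finset.mem_of_mem_erase hT2)
          with h | h | h
        · exact Or.inl (Finset.sdiff_subset_sdiff h le_rfl)
        · exact Or.inr (Or.inl (Finset.sdiff_subset_sdiff h le_rfl))
        · exact Or.inr (Or.inr (h.mono Finset.sdiff_subset Finset.sdiff_subset))
    have hEr : (F.erase S).card = F.card - 1 := Finset.card_erase_of_mem hS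
    have hFpos : 1 ≤ F.card := Finset.card_pos.mpr ⟨S, hS⟩
    omega

section Tree
variable {V : Type*} [DecidableEq V] {G : SimpleGraph V}

theorem tree_path_unique (hG : G.IsTree) {x y : V} (p q : G.Walk x y) (hp : p.IsPath)
    (hq : q.IsPath) : p = q := by
  have := isAcyclic_iff_path_unique.mp (SimpleGraph.IsTree.IsAcyclic hG)
    (p := ⟨p, hp⟩) (q := ⟨q, hq⟩)
  exact congrArg Subtype.val this

theorem tree_dist_eq_length (hG : G.IsTree) {x y : V} (p : G.Walk x y) (hp : p.IsPath) :
    G.dist x y = p.length := by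
  obtain ⟨q, hq⟩ := (SimpleGraph.IsTree.isConnected hG).exists_walk_length_eq_dist x y
  have h1 : p = q.bypass := tree_path_unique hG p q.bypass hp q.bypass_isPath
  have h2 := q.length_bypass_le
  have h3 := SimpleGraph.dist_le p
  rw [h1] at h3 ⊢
  omega

theorem tree_comp (hG : G.IsTree) :
    ∀ {x r : V} (p : G.Walk x r), p.IsPath → ∀ v w, v ∈ p.support → w ∈ p.support →
      (∀ pv : G.Walk v r, pv.IsPath → w ∈ pv.support) ∨
      (∀ pw : G.Walk w r, pw.IsPath → v ∈ pw.support) := by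
  intro x r p
  induction p with
  | nil =>
    intro hp v w hv hw
    simp only [Walk.support_nil, List.mem_singleton] at hv hw
    subst hv; subst hw
    exact Or.inl (fun pv _ => pv.start_mem_support)
  | cons h q ih =>
    intro hp v w hv hw
    rw [Walk.support_cons, List.mem_cons] at hv hw
    rcases hv with rfl | hv
    · left; intro pv hpv
      have hh : pv = Walk.cons h q := tree_path_unique hG _ _ hpv hp
      rw [hh, Walk.support_cons, List.mem_cons]
      exact hw
    · rcases hw with rfl | hw
      · right; intro pw hpw
        have hh : pw = Walk.cons h q := tree_path_unique hG _ _ hpw hp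
        rw [hh, Walk.support_cons, List.mem_cons]
        exact Or.inr hv
      · exact ih hp.of_cons v w hv hw

end Tree


/-- `a` is the meet (lowest common ancestor relative to root `r`) of `x` and `y`:
it lies on both root-paths and is at maximal distance from `r` among vertices of
their intersection. -/
def IsMeet {V : Type*} [Fintype V] (G : SimpleGraph V) (r x y a : V) : Prop :=
  ∀ (q : G.Walk x r) (s : G.Walk y r), q.IsPath → s.IsPath →
    a ∈ q.support ∧ a ∈ s.support ∧
      ∀ b, b ∈ q.support → b ∈ s.support → G.dist b r ≤ G.dist a r

/-- In a rooted tree, for any `n` vertices, the set of pairwise meets contains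
at most `n - 1` distinct vertices. -/
theorem meets_card_le {V : Type*} [Fintype V] (G : SimpleGraph V)
    (hG : G.IsTree) (r : V) (n : ℕ) (hn : 2 ≤ n)
    (i : Fin n → V) (m : Fin n → Fin n → V)
    (hm : ∀ s t : Fin n, s ≠ t → IsMeet G r (i s) (i t) (m s t)) :
    {v : V | ∃ s t : Fin n, s ≠ t ∧ m s t = v}.ncard ≤ n - 1 := by
  classical
  have hex : ∀ x : V, ∃ p : G.Walk x r, p.IsPath :=
    fun x => ⟨(((SimpleGraph.IsTree.isConnected hG).preconnected x r).some).bypass,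
      Walk.bypass_isPath _⟩
  choose P hP using hex
  -- subset property (ancestor transitivity)
  have hsub : ∀ (x v : V) (h : v ∈ (P x).support), (P v).support ⊆ (P x).support := by
    intro x v h
    have hd : P v = (P x).dropUntil v h :=
      tree_path_unique hG _ _ (hP v) ((hP x).dropUntil h)
    rw [hd]
    exact Walk.support_dropUntil_subset _ h
  -- strict distance decrease along root paths
  have hlt : ∀ (v w : V), w ∈ (P v).support → w ≠ v → G.dist w r < G.dist v r := by
    intro v w hw hne
    have hspec := Walk.take_spec (P v) hw
    have hdrop : (P v).dropUntil w hw = P w :=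
      tree_path_unique hG _ _ ((hP v).dropUntil hw) (hP w)
    have hlv : G.dist v r = (P v).length := tree_dist_eq_length hG _ (hP v)
    have hlw : G.dist w r = ((P v).dropUntil w hw).length := by
      rw [hdrop]; exact tree_dist_eq_length hG _ (hP w)
    have hsum : ((P v).takeUntil w hw).length + ((P v).dropUntil w hw).length
        = (P v).length := by
      rw [← Walk.length_append, hspec]
    have htk : ((P v).takeUntil w hw).length ≠ 0 := by
      intro h0
      exact hne (Walk.eq_of_length_eq_zero h0).symm
    omega
  -- comparability specialized to the chosen paths
  have hcomp : ∀ (x v w : V), v ∈ (P x).support → w ∈ (P x).support →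
      w ∈ (P v).support ∨ v ∈ (P w).support := by
    intro x v w hv hw
    rcases tree_comp hG (P x) (hP x) v w hv hw with h | h
    · exact Or.inl (h (P v) (hP v))
    · exact Or.inr (h (P w) (hP w))
  -- the "ancestor index set" of a vertex
  set A : V → Finset (Fin n) := fun v => Finset.univ.filter (fun s => v ∈ (P (i s)).support)
    with hA
  have hmemA : ∀ v s, s ∈ A v ↔ v ∈ (P (i s)).support := by
    intro v s; simp [hA]
  -- key rigidity: a meet with the same A-set lying on the root path of v equals v
  have key : ∀ v w : V, (∃ s t : Fin n, s ≠ t ∧ m s t = w) → A v = A w →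
      w ∈ (P v).support → w = v := by
    intro v w ⟨s', t', hst', hw⟩ hAvw hwv
    by_contra hne
    have hd1 : G.dist w r < G.dist v r := hlt v w hwv hne
    have hmw := hm s' t' hst' (P (i s')) (P (i t')) (hP _) (hP _)
    rw [hw] at hmw
    have hs' : s' ∈ A w := (hmemA w s').mpr hmw.1
    have ht' : t' ∈ A w := (hmemA w t').mpr hmw.2.1
    rw [← hAvw] at hs' ht'
    have hv1 : v ∈ (P (i s')).support := (hmemA v s').mp hs'
    have hv2 : v ∈ (P (i t')).support := (hmemA v t').mp ht'
    have := hmw.2.2 v hv1 hv2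
    omega
  -- the meet set
  set S : Set V := {v : V | ∃ s t : Fin n, s ≠ t ∧ m s t = v} with hSdef
  have hfin : S.Finite := Set.toFinite _
  rw [Set.ncard_eq_toFinset_card' S]
  set MS : Finset V := S.toFinset with hMS
  have hmeet : ∀ v ∈ MS, ∃ s t : Fin n, s ≠ t ∧ m s t = v := by
    intro v hv
    rw [hMS, Set.mem_toFinset] at hv
    exact hv
  -- A is injective on MS
  have hinj : Set.InjOn A ↑MS := by
    intro v hv w hw hAeq
    obtain ⟨s, t, hst, hv'⟩ := hmeet v (Finset.mem_coe.mp hv)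
    have hw' := hmeet w (Finset.mem_coe.mp hw)
    have hmv := hm s t hst (P (i s)) (P (i t)) (hP _) (hP _)
    rw [hv'] at hmv
    have hvp : v ∈ (P (i s)).support := hmv.1
    have hwp : w ∈ (P (i s)).support := (hmemA w s).mp (hAeq ▸ (hmemA v s).mpr hvp)
    rcases hcomp (i s) v w hvp hwp with h | h
    · exact (key v w hw' hAeq h).symm
    · exact key w v ⟨s, t, hst, hv'⟩ hAeq.symm h
  have hcard : MS.card = (MS.image A).card := (Finset.card_image_of_injOn hinj).symm
  have happ : (MS.image A).card ≤ (Finset.univ : Finset (Fin n)).card - 1 := by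
    apply laminar_card_le n (Finset.univ : Finset (Fin n)) (MS.image A) (by simp)
    · intro S' hS'
      obtain ⟨v, hv, rfl⟩ := Finset.mem_image.mp hS'
      obtain ⟨s, t, hst, hv'⟩ := hmeet v hv
      have hmv := hm s t hst (P (i s)) (P (i t)) (hP _) (hP _)
      rw [hv'] at hmv
      have hs1 : s ∈ A v := (hmemA v s).mpr hmv.1
      have ht1 : t ∈ A v := (hmemA v t).mpr hmv.2.1
      exact Finset.one_lt_card.mpr ⟨s, hs1, t, ht1, hst⟩
    · exact fun S' _ => Finset.subset_univ S'
    · intro S1 h1 S2 h2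
      obtain ⟨v, hv, rfl⟩ := Finset.mem_image.mp h1
      obtain ⟨w, hw, rfl⟩ := Finset.mem_image.mp h2
      by_cases hdis : Disjoint (A v) (A w)
      · exact Or.inr (Or.inr hdis)
      obtain ⟨s, hs1, hs2⟩ := Finset.not_disjoint_iff.mp hdis
      have hvp : v ∈ (P (i s)).support := (hmemA v s).mp hs1
      have hwp : w ∈ (P (i s)).support := (hmemA w s).mp hs2
      rcases hcomp (i s) v w hvp hwp with h | h
      · left
        intro t ht
        exact (hmemA w t).mpr (hsub (i t) v ((hmemA v t).mp ht) h)
      · right; left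
        intro t ht
        exact (hmemA v t).mpr (hsub (i t) w ((hmemA w t).mp ht) h)
  have hfn : (Finset.univ : Finset (Fin n)).card = n := by simp
  omega
end
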